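/- arXiv:1903.08776 — 3 statements merged into one kernel-verified Lean document; each statement's English description precedes it below -/
import Mathlib

section
/- Suppose the non-symmetric Riccati terminal value problem for Λ_2 has a solution on [0, T]. Let χ_1 : [0,T] → ℝ^n be the unique solution of χ̇_1 = (Λ_1 M + Λ_2 M − Aᵀ) χ_1 + Q η, χ_1(T) = −Q_f η_f, and let X̄ : [0,T] → ℝ^n be the unique solution of dX̄/dt = (A − M(Λ_1 + Λ_2) + G) X̄ − M χ_1, X̄(0) = x_0. Then the MFG TPBV problem has a unique solution (X̄*, s), and it is given by X̄*(t) = X̄(t) and s(t) = Λ_2(t) X̄(t) + χ_1(t) for t ∈ [0, T]. -/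
/-! Substituting `s = Λ₂ X̄ + χ₁` decouples the two-point boundary value problem: by the Riccati
equation for `Λ₂` and the linear equation for `χ₁`, the derivative of `Λ₂ X + χ₁` along any
state `X` driven by a costate `s` equals the costate right-hand side up to
`(Λ₁ M + Λ₂ M − Aᵀ)(s − (Λ₂ X + χ₁))`. Hence `(X̄, Λ₂ X̄ + χ₁)` is a solution, and for any solution
`(X, s)` the defect `s − (Λ₂ X + χ₁)` solves a homogeneous linear equation with zero terminal
value, so it vanishes by backward uniqueness; then `X` and `X̄` solve the same forward linear
equation from `x₀` and coincide. -/

open Matrix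

/-- `M = B R⁻¹ Bᵀ`. -/
noncomputable def Mmat (n n1 : ℕ) (B : Matrix (Fin n) (Fin n1) ℝ)
    (R : Matrix (Fin n1) (Fin n1) ℝ) : Matrix (Fin n) (Fin n) ℝ :=
  B * R⁻¹ * Bᵀ

/-- The `2n × 2n` coefficient matrix `𝔸(t)` of the TPBV problem, where `L1 = Λ₁(t)`. -/
noncomputable def bbA (n n1 : ℕ) (A G Q Γ : Matrix (Fin n) (Fin n) ℝ)
    (B : Matrix (Fin n) (Fin n1) ℝ) (R : Matrix (Fin n1) (Fin n1) ℝ)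
    (L1 : Matrix (Fin n) (Fin n) ℝ) :
    Matrix (Fin n ⊕ Fin n) (Fin n ⊕ Fin n) ℝ :=
  Matrix.fromBlocks (A - Mmat n n1 B R * L1 + G) (-(Mmat n n1 B R))
    (Q * Γ - L1 * G) (-Aᵀ + L1 * Mmat n n1 B R)

/-- `Λ₁` solves the symmetric Riccati TVP on `[0,T]`. -/
def IsLam1Sol (n n1 : ℕ) (A Q Qf : Matrix (Fin n) (Fin n) ℝ)
    (B : Matrix (Fin n) (Fin n1) ℝ) (R : Matrix (Fin n1) (Fin n1) ℝ) (T : ℝ)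
    (Λ1 : ℝ → Matrix (Fin n) (Fin n) ℝ) : Prop :=
  (∀ t ∈ Set.Icc (0:ℝ) T, ∀ r c,
    HasDerivWithinAt (fun s => Λ1 s r c)
      ((Λ1 t * Mmat n n1 B R * Λ1 t - (Λ1 t * A + Aᵀ * Λ1 t) - Q) r c)
      (Set.Icc (0:ℝ) T) t)
  ∧ Λ1 T = Qf

/-- `Φ(t,τ)` is the fundamental solution matrix of `∂Φ/∂t = 𝔸(t) Φ`, `Φ(τ,τ) = I`,
for `t, τ ∈ [0,T]`. -/
def IsFundSol (n n1 : ℕ) (A G Q Γ : Matrix (Fin n) (Fin n) ℝ)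
    (B : Matrix (Fin n) (Fin n1) ℝ) (R : Matrix (Fin n1) (Fin n1) ℝ) (T : ℝ)
    (Λ1 : ℝ → Matrix (Fin n) (Fin n) ℝ)
    (Φ : ℝ → ℝ → Matrix (Fin n ⊕ Fin n) (Fin n ⊕ Fin n) ℝ) : Prop :=
  ∀ τ ∈ Set.Icc (0:ℝ) T, Φ τ τ = 1 ∧
    ∀ t ∈ Set.Icc (0:ℝ) T, ∀ p q,
      HasDerivWithinAt (fun s => Φ s τ p q)
        ((bbA n n1 A G Q Γ B R (Λ1 t) * Φ t τ) p q) (Set.Icc (0:ℝ) T) t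

/-- `Z₁ = Φ₂₂(T,0) + Q_f Γ_f Φ₁₂(T,0)`. -/
noncomputable def Z1mat (n : ℕ) (Qf Γf : Matrix (Fin n) (Fin n) ℝ) (T : ℝ)
    (Φ : ℝ → ℝ → Matrix (Fin n ⊕ Fin n) (Fin n ⊕ Fin n) ℝ) :
    Matrix (Fin n) (Fin n) ℝ :=
  (Φ T 0).toBlocks₂₂ + Qf * Γf * (Φ T 0).toBlocks₁₂

/-- `Z₂ = [Φ₂₁(T,0) + Q_f Γ_f Φ₁₁(T,0)] x₀ + Q_f η_f
      + ∫₀ᵀ [Φ₂₂(T,τ) + Q_f Γ_f Φ₁₂(T,τ)] Q η dτ`. -/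
noncomputable def Z2vec (n : ℕ) (Q Qf Γf : Matrix (Fin n) (Fin n) ℝ)
    (η ηf x0 : Fin n → ℝ) (T : ℝ)
    (Φ : ℝ → ℝ → Matrix (Fin n ⊕ Fin n) (Fin n ⊕ Fin n) ℝ)
    (j : Fin n) : ℝ :=
  (((Φ T 0).toBlocks₂₁ + Qf * Γf * (Φ T 0).toBlocks₁₁) *ᵥ x0) j
    + (Qf *ᵥ ηf) j
    + ∫ τ in (0:ℝ)..T,
        ((((Φ T τ).toBlocks₂₂ + Qf * Γf * (Φ T τ).toBlocks₁₂) *ᵥ (Q *ᵥ η)) j)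

/-- `(X̄, s)` solves the MFG TPBV problem on `[0,T]`. -/
def IsTPBVSol (n n1 : ℕ) (A G Q Qf Γ Γf : Matrix (Fin n) (Fin n) ℝ)
    (B : Matrix (Fin n) (Fin n1) ℝ) (R : Matrix (Fin n1) (Fin n1) ℝ)
    (η ηf x0 : Fin n → ℝ) (T : ℝ)
    (Λ1 : ℝ → Matrix (Fin n) (Fin n) ℝ) (X s : ℝ → Fin n → ℝ) : Prop :=
  (∀ t ∈ Set.Icc (0:ℝ) T, ∀ j,
    HasDerivWithinAt (fun u => X u j)
      (((A - Mmat n n1 B R * Λ1 t + G) *ᵥ X t - Mmat n n1 B R *ᵥ s t) j)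
      (Set.Icc (0:ℝ) T) t)
  ∧ (∀ t ∈ Set.Icc (0:ℝ) T, ∀ j,
    HasDerivWithinAt (fun u => s u j)
      ((-((Aᵀ - Λ1 t * Mmat n n1 B R) *ᵥ s t) - (Λ1 t * G) *ᵥ X t
        + Q *ᵥ (Γ *ᵥ X t + η)) j)
      (Set.Icc (0:ℝ) T) t)
  ∧ X 0 = x0
  ∧ s T = -(Qf *ᵥ (Γf *ᵥ X T + ηf))

/-- Right-hand side of the non-symmetric Riccati ODE for `Λ₂` (with `M = B R⁻¹ Bᵀ`). -/
noncomputable def lam2RHS (n n1 : ℕ) (A G Q Γ : Matrix (Fin n) (Fin n) ℝ)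
    (B : Matrix (Fin n) (Fin n1) ℝ) (R : Matrix (Fin n1) (Fin n1) ℝ)
    (L1 L2 : Matrix (Fin n) (Fin n) ℝ) : Matrix (Fin n) (Fin n) ℝ :=
  L1 * Mmat n n1 B R * L2 + L2 * Mmat n n1 B R * L1 + L2 * Mmat n n1 B R * L2
    - (L1 * G + L2 * (A + G) + Aᵀ * L2) + Q * Γ

open Set

section LinearODE

variable {ι : Type*} [Fintype ι] {a b : ℝ} {C : ℝ → Matrix ι ι ℝ}
  {c f g : ℝ → ι → ℝ}

theorem exists_lipschitzWith_mulVec_add (hC : ContinuousOn C (Icc a b)) :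
    ∃ K, ∀ t ∈ Icc a b, LipschitzWith K (fun x => C t *ᵥ x + c t) := by
  let toCLM : Matrix ι ι ℝ →ₗ[ℝ] (ι → ℝ) →L[ℝ] ι → ℝ :=
    LinearMap.toContinuousLinearMap.toLinearMap ∘ₗ mulVecBilin ℝ ℝ
  obtain ⟨K, hK⟩ := isCompact_Icc.exists_bound_of_continuousOn
    (toCLM.continuous_of_finiteDimensional.comp_continuousOn hC)
  refine ⟨K.toNNReal, fun t ht => LipschitzWith.of_dist_le_mul fun x y => ?_⟩
  rw [dist_add_right, dist_eq_norm, dist_eq_norm, ← mulVec_sub]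
  calc ‖C t *ᵥ (x - y)‖ = ‖toCLM (C t) (x - y)‖ := rfl
    _ ≤ ‖toCLM (C t)‖ * ‖x - y‖ := (toCLM (C t)).le_opNorm _
    _ ≤ K.toNNReal * ‖x - y‖ := by
      gcongr
      exact (hK t ht).trans (Real.le_coe_toNNReal K)

theorem mulVecODE_solution_unique_of_mem_Icc_right (hC : ContinuousOn C (Icc a b))
    (hf : ∀ t ∈ Icc a b, HasDerivWithinAt f (C t *ᵥ f t + c t) (Icc a b) t)
    (hg : ∀ t ∈ Icc a b, HasDerivWithinAt g (C t *ᵥ g t + c t) (Icc a b) t)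
    (ha : f a = g a) : EqOn f g (Icc a b) := by
  obtain ⟨K, hK⟩ := exists_lipschitzWith_mulVec_add (c := c) hC
  exact ODE_solution_unique_of_mem_Icc_right (s := fun _ => univ)
    (fun t ht => (hK t (Ico_subset_Icc_self ht)).lipschitzOnWith)
    (fun t ht => (hf t ht).continuousWithinAt)
    (fun t ht => (hf t (Ico_subset_Icc_self ht)).mono_of_mem_nhdsWithin
      (Icc_mem_nhdsGE_of_mem ht))
    (fun _ _ => mem_univ _)
    (fun t ht => (hg t ht).continuousWithinAt)
    (fun t ht => (hg t (Ico_subset_Icc_self ht)).mono_of_mem_nhdsWithin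
      (Icc_mem_nhdsGE_of_mem ht))
    (fun _ _ => mem_univ _) ha

theorem mulVecODE_solution_unique_of_mem_Icc_left (hC : ContinuousOn C (Icc a b))
    (hf : ∀ t ∈ Icc a b, HasDerivWithinAt f (C t *ᵥ f t + c t) (Icc a b) t)
    (hg : ∀ t ∈ Icc a b, HasDerivWithinAt g (C t *ᵥ g t + c t) (Icc a b) t)
    (hb : f b = g b) : EqOn f g (Icc a b) := by
  obtain ⟨K, hK⟩ := exists_lipschitzWith_mulVec_add (c := c) hC
  exact ODE_solution_unique_of_mem_Icc_left (s := fun _ => univ)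
    (fun t ht => (hK t (Ioc_subset_Icc_self ht)).lipschitzOnWith)
    (fun t ht => (hf t ht).continuousWithinAt)
    (fun t ht => (hf t (Ioc_subset_Icc_self ht)).mono_of_mem_nhdsWithin
      (Icc_mem_nhdsLE_of_mem ht))
    (fun _ _ => mem_univ _)
    (fun t ht => (hg t ht).continuousWithinAt)
    (fun t ht => (hg t (Ioc_subset_Icc_self ht)).mono_of_mem_nhdsWithin
      (Icc_mem_nhdsLE_of_mem ht))
    (fun _ _ => mem_univ _) hb

theorem hasDerivWithinAt_mulVec {Λ : ℝ → Matrix ι ι ℝ} {Λ' : Matrix ι ι ℝ} {x : ℝ → ι → ℝ}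
    {x' : ι → ℝ} {s : Set ℝ} {t : ℝ}
    (hΛ : ∀ i j, HasDerivWithinAt (fun u => Λ u i j) (Λ' i j) s t)
    (hx : HasDerivWithinAt x x' s t) :
    HasDerivWithinAt (fun u => Λ u *ᵥ x u) (Λ' *ᵥ x t + Λ t *ᵥ x') s t := by
  refine hasDerivWithinAt_pi.2 fun i => ?_
  simp only [Pi.add_apply, mulVec, dotProduct, ← Finset.sum_add_distrib]
  exact HasDerivWithinAt.fun_sum fun j _ =>
    (hΛ i j).mul (hasDerivWithinAt_pi.1 hx j) |>.congr_deriv (by ring)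

end LinearODE

theorem continuousOn_of_hasDerivWithinAt_apply {ι : Type*} {Λ : ℝ → Matrix ι ι ℝ}
    {Λ' : ℝ → Matrix ι ι ℝ} {s : Set ℝ}
    (h : ∀ t ∈ s, ∀ i j, HasDerivWithinAt (fun u => Λ u i j) (Λ' t i j) s t) :
    ContinuousOn Λ s := fun t ht =>
  continuousWithinAt_pi.2 fun i => continuousWithinAt_pi.2 fun j =>
    (h t ht i j).continuousWithinAt

section Decoupling

variable {n n1 : ℕ} {T : ℝ} {A G Q Qf Γ Γf : Matrix (Fin n) (Fin n) ℝ}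
  {B : Matrix (Fin n) (Fin n1) ℝ} {R : Matrix (Fin n1) (Fin n1) ℝ} {η ηf x0 : Fin n → ℝ}
  {Λ1 Λ2 : ℝ → Matrix (Fin n) (Fin n) ℝ} {χ1 : ℝ → Fin n → ℝ}

local notation "𝕄" => Mmat n n1 B R

theorem closedLoop_mulVec (L1 L2 : Matrix (Fin n) (Fin n) ℝ) (x w : Fin n → ℝ) :
    (A - 𝕄 * (L1 + L2) + G) *ᵥ x - 𝕄 *ᵥ w = (A - 𝕄 * L1 + G) *ᵥ x - 𝕄 *ᵥ (L2 *ᵥ x + w) := by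
  simp only [add_mulVec, sub_mulVec, mulVec_add, Matrix.mul_add,
    mulVec_mulVec]
  abel

theorem costate_sub_decoupled_costate (L1 L2 : Matrix (Fin n) (Fin n) ℝ) (x w s : Fin n → ℝ) :
    (-((Aᵀ - L1 * 𝕄) *ᵥ s) - (L1 * G) *ᵥ x + Q *ᵥ (Γ *ᵥ x + η))
      - (lam2RHS n n1 A G Q Γ B R L1 L2 *ᵥ x + L2 *ᵥ ((A - 𝕄 * L1 + G) *ᵥ x - 𝕄 *ᵥ s)
        + ((L1 * 𝕄 + L2 * 𝕄 - Aᵀ) *ᵥ w + Q *ᵥ η))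
    = (L1 * 𝕄 + L2 * 𝕄 - Aᵀ) *ᵥ (s - (L2 *ᵥ x + w)) := by
  simp only [lam2RHS, add_mulVec, sub_mulVec, mulVec_add,
    mulVec_sub, mulVec_mulVec, Matrix.mul_add,
    Matrix.add_mul, Matrix.sub_mul, Matrix.mul_assoc]
  abel

theorem hasDerivWithinAt_decoupled_costate {L1 : Matrix (Fin n) (Fin n) ℝ}
    {X s : ℝ → Fin n → ℝ} {S : Set ℝ} {t : ℝ}
    (hΛ2 : ∀ r c, HasDerivWithinAt (fun u => Λ2 u r c)
      (lam2RHS n n1 A G Q Γ B R L1 (Λ2 t) r c) S t)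
    (hχ1 : HasDerivWithinAt χ1 ((L1 * 𝕄 + Λ2 t * 𝕄 - Aᵀ) *ᵥ χ1 t + Q *ᵥ η) S t)
    (hX : HasDerivWithinAt X ((A - 𝕄 * L1 + G) *ᵥ X t - 𝕄 *ᵥ s t) S t) :
    HasDerivWithinAt (fun u => Λ2 u *ᵥ X u + χ1 u)
      ((-((Aᵀ - L1 * 𝕄) *ᵥ s t) - (L1 * G) *ᵥ X t + Q *ᵥ (Γ *ᵥ X t + η))
        - (L1 * 𝕄 + Λ2 t * 𝕄 - Aᵀ) *ᵥ (s t - (Λ2 t *ᵥ X t + χ1 t))) S t :=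
  ((hasDerivWithinAt_mulVec hΛ2 hX).add hχ1).congr_deriv <| by
    rw [← costate_sub_decoupled_costate, sub_sub_cancel]

theorem isTPBVSol_decoupled {Xbar : ℝ → Fin n → ℝ}
    (hΛ2 : ∀ t ∈ Icc 0 T, ∀ r c, HasDerivWithinAt (fun u => Λ2 u r c)
      (lam2RHS n n1 A G Q Γ B R (Λ1 t) (Λ2 t) r c) (Icc 0 T) t)
    (hΛ2T : Λ2 T = -(Qf * Γf))
    (hχ1 : ∀ t ∈ Icc 0 T, HasDerivWithinAt χ1
      ((Λ1 t * 𝕄 + Λ2 t * 𝕄 - Aᵀ) *ᵥ χ1 t + Q *ᵥ η) (Icc 0 T) t)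
    (hχ1T : χ1 T = -(Qf *ᵥ ηf))
    (hXbar : ∀ t ∈ Icc 0 T, HasDerivWithinAt Xbar
      ((A - 𝕄 * (Λ1 t + Λ2 t) + G) *ᵥ Xbar t - 𝕄 *ᵥ χ1 t) (Icc 0 T) t)
    (hXbar0 : Xbar 0 = x0) :
    IsTPBVSol n n1 A G Q Qf Γ Γf B R η ηf x0 T Λ1 Xbar (fun u => Λ2 u *ᵥ Xbar u + χ1 u) := by
  have hXbar' : ∀ t ∈ Icc 0 T, HasDerivWithinAt Xbar
      ((A - 𝕄 * Λ1 t + G) *ᵥ Xbar t - 𝕄 *ᵥ (Λ2 t *ᵥ Xbar t + χ1 t)) (Icc 0 T) t :=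
    fun t ht => (hXbar t ht).congr_deriv (closedLoop_mulVec _ _ _ _)
  refine ⟨fun t ht => hasDerivWithinAt_pi.1 (hXbar' t ht), fun t ht => ?_, hXbar0, ?_⟩
  · refine hasDerivWithinAt_pi.1 ((hasDerivWithinAt_decoupled_costate
      (s := fun u => Λ2 u *ᵥ Xbar u + χ1 u) (hΛ2 t ht) (hχ1 t ht) (hXbar' t ht)).congr_deriv ?_)
    rw [sub_self, mulVec_zero, sub_zero]
  · simp only [hΛ2T, hχ1T, neg_mulVec, mulVec_add, mulVec_mulVec]
    abel

theorem eq_decoupled_of_isTPBVSol {Xbar X s : ℝ → Fin n → ℝ}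
    (hΛ1 : ContinuousOn Λ1 (Icc 0 T))
    (hΛ2 : ∀ t ∈ Icc 0 T, ∀ r c, HasDerivWithinAt (fun u => Λ2 u r c)
      (lam2RHS n n1 A G Q Γ B R (Λ1 t) (Λ2 t) r c) (Icc 0 T) t)
    (hΛ2T : Λ2 T = -(Qf * Γf))
    (hχ1 : ∀ t ∈ Icc 0 T, HasDerivWithinAt χ1
      ((Λ1 t * 𝕄 + Λ2 t * 𝕄 - Aᵀ) *ᵥ χ1 t + Q *ᵥ η) (Icc 0 T) t)
    (hχ1T : χ1 T = -(Qf *ᵥ ηf))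
    (hXbar : ∀ t ∈ Icc 0 T, HasDerivWithinAt Xbar
      ((A - 𝕄 * (Λ1 t + Λ2 t) + G) *ᵥ Xbar t - 𝕄 *ᵥ χ1 t) (Icc 0 T) t)
    (hXbar0 : Xbar 0 = x0)
    (hsol : IsTPBVSol n n1 A G Q Qf Γ Γf B R η ηf x0 T Λ1 X s) :
    ∀ t ∈ Icc 0 T, X t = Xbar t ∧ s t = Λ2 t *ᵥ Xbar t + χ1 t := by
  obtain ⟨hX, hs, hX0, hsT⟩ := hsol
  replace hX := fun t ht => hasDerivWithinAt_pi.2 (hX t ht)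
  replace hs := fun t ht => hasDerivWithinAt_pi.2 (hs t ht)
  have hΛ2c := continuousOn_of_hasDerivWithinAt_apply hΛ2
  have hdefect : EqOn (fun u => s u - (Λ2 u *ᵥ X u + χ1 u)) 0 (Icc 0 T) := by
    refine mulVecODE_solution_unique_of_mem_Icc_left (c := 0)
      (C := fun t => Λ1 t * 𝕄 + Λ2 t * 𝕄 - Aᵀ)
      ((hΛ1.mul continuousOn_const).add (hΛ2c.mul continuousOn_const) |>.sub continuousOn_const)
      (fun t ht => ((hs t ht).sub (hasDerivWithinAt_decoupled_costate (hΛ2 t ht) (hχ1 t ht)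
        (hX t ht))).congr_deriv (by rw [sub_sub_cancel, Pi.zero_apply, add_zero]))
      (fun t ht => (hasDerivWithinAt_const t _ 0).congr_deriv (by simp)) ?_
    simp only [hsT, hΛ2T, hχ1T, Pi.zero_apply, neg_mulVec, mulVec_add, mulVec_mulVec]
    abel
  have hs_eq : ∀ t ∈ Icc 0 T, s t = Λ2 t *ᵥ X t + χ1 t := fun t ht => sub_eq_zero.1 (hdefect ht)
  have hXeq : EqOn X Xbar (Icc 0 T) := by
    refine mulVecODE_solution_unique_of_mem_Icc_right (c := fun t => -(𝕄 *ᵥ χ1 t))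
      (C := fun t => A - 𝕄 * (Λ1 t + Λ2 t) + G)
      (continuousOn_const.sub (continuousOn_const.mul (hΛ1.add hΛ2c)) |>.add continuousOn_const)
      (fun t ht => (hX t ht).congr_deriv ?_) (fun t ht => (hXbar t ht).congr_deriv ?_)
      (hX0.trans hXbar0.symm)
    · rw [hs_eq t ht, ← closedLoop_mulVec, sub_eq_add_neg]
    · rw [sub_eq_add_neg]
  exact fun t ht => ⟨hXeq ht, hXeq ht ▸ hs_eq t ht⟩

end Decoupling

theorem tpbv_unique_solution_from_lam2_general
    (n n1 : ℕ) (T : ℝ)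
    (A G Q Qf Γ Γf : Matrix (Fin n) (Fin n) ℝ)
    (B : Matrix (Fin n) (Fin n1) ℝ) (R : Matrix (Fin n1) (Fin n1) ℝ)
    (η ηf x0 : Fin n → ℝ)
    (Λ1 : ℝ → Matrix (Fin n) (Fin n) ℝ)
    (hΛ1 : IsLam1Sol n n1 A Q Qf B R T Λ1)
    (Λ2 : ℝ → Matrix (Fin n) (Fin n) ℝ)
    (hΛ2 : (∀ t ∈ Set.Icc (0:ℝ) T, ∀ r c,
        HasDerivWithinAt (fun s => Λ2 s r c)
          (lam2RHS n n1 A G Q Γ B R (Λ1 t) (Λ2 t) r c) (Set.Icc (0:ℝ) T) t)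
      ∧ Λ2 T = -(Qf * Γf))
    (χ1 : ℝ → Fin n → ℝ)
    (hχ1 : (∀ t ∈ Set.Icc (0:ℝ) T, ∀ r,
        HasDerivWithinAt (fun s => χ1 s r)
          (((Λ1 t * Mmat n n1 B R + Λ2 t * Mmat n n1 B R - Aᵀ) *ᵥ χ1 t
            + Q *ᵥ η) r) (Set.Icc (0:ℝ) T) t)
      ∧ χ1 T = -(Qf *ᵥ ηf))
    (Xbar : ℝ → Fin n → ℝ)
    (hXbar : (∀ t ∈ Set.Icc (0:ℝ) T, ∀ r,
        HasDerivWithinAt (fun u => Xbar u r)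
          (((A - Mmat n n1 B R * (Λ1 t + Λ2 t) + G) *ᵥ Xbar t
            - Mmat n n1 B R *ᵥ χ1 t) r) (Set.Icc (0:ℝ) T) t)
      ∧ Xbar 0 = x0) :
    (∃ X s : ℝ → Fin n → ℝ, IsTPBVSol n n1 A G Q Qf Γ Γf B R η ηf x0 T Λ1 X s) ∧
    (∀ X s : ℝ → Fin n → ℝ,
      IsTPBVSol n n1 A G Q Qf Γ Γf B R η ηf x0 T Λ1 X s →
      ∀ t ∈ Set.Icc (0:ℝ) T, X t = Xbar t ∧ s t = Λ2 t *ᵥ Xbar t + χ1 t) := by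
  obtain ⟨hΛ2', hΛ2T⟩ := hΛ2
  have hχ1' := fun t ht => hasDerivWithinAt_pi.2 (hχ1.1 t ht)
  have hXbar' := fun t ht => hasDerivWithinAt_pi.2 (hXbar.1 t ht)
  exact ⟨⟨Xbar, _, isTPBVSol_decoupled hΛ2' hΛ2T hχ1' hχ1.2 hXbar' hXbar.2⟩,
    fun X s => eq_decoupled_of_isTPBVSol (continuousOn_of_hasDerivWithinAt_apply hΛ1.1)
      hΛ2' hΛ2T hχ1' hχ1.2 hXbar' hXbar.2⟩

/-- If the non-symmetric Riccati TVP for `Λ₂` has a solution on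
`[0,T]`, with `χ₁` solving its linear TVP and `X̄` the closed-loop mean field
trajectory, then the MFG TPBV problem has a unique solution `(X̄*, s)`, given by
`X̄* = X̄` and `s = Λ₂ X̄ + χ₁` on `[0,T]`. -/
theorem tpbv_unique_solution_from_lam2
    (n n1 : ℕ) (hn : 0 < n) (hn1 : 0 < n1) (T : ℝ) (hT : 0 < T)
    (A G Q Qf Γ Γf : Matrix (Fin n) (Fin n) ℝ)
    (B : Matrix (Fin n) (Fin n1) ℝ) (R : Matrix (Fin n1) (Fin n1) ℝ)
    (η ηf x0 : Fin n → ℝ)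
    (hQ : Q.PosSemidef) (hQf : Qf.PosSemidef) (hR : R.PosDef)
    (Λ1 : ℝ → Matrix (Fin n) (Fin n) ℝ)
    (hΛ1 : IsLam1Sol n n1 A Q Qf B R T Λ1)
    (Λ2 : ℝ → Matrix (Fin n) (Fin n) ℝ)
    (hΛ2 : (∀ t ∈ Set.Icc (0:ℝ) T, ∀ r c,
        HasDerivWithinAt (fun s => Λ2 s r c)
          (lam2RHS n n1 A G Q Γ B R (Λ1 t) (Λ2 t) r c) (Set.Icc (0:ℝ) T) t)
      ∧ Λ2 T = -(Qf * Γf))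
    (χ1 : ℝ → Fin n → ℝ)
    (hχ1 : (∀ t ∈ Set.Icc (0:ℝ) T, ∀ r,
        HasDerivWithinAt (fun s => χ1 s r)
          (((Λ1 t * Mmat n n1 B R + Λ2 t * Mmat n n1 B R - Aᵀ) *ᵥ χ1 t
            + Q *ᵥ η) r) (Set.Icc (0:ℝ) T) t)
      ∧ χ1 T = -(Qf *ᵥ ηf))
    (Xbar : ℝ → Fin n → ℝ)
    (hXbar : (∀ t ∈ Set.Icc (0:ℝ) T, ∀ r,
        HasDerivWithinAt (fun u => Xbar u r)
          (((A - Mmat n n1 B R * (Λ1 t + Λ2 t) + G) *ᵥ Xbar t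
            - Mmat n n1 B R *ᵥ χ1 t) r) (Set.Icc (0:ℝ) T) t)
      ∧ Xbar 0 = x0) :
    (∃ X s : ℝ → Fin n → ℝ, IsTPBVSol n n1 A G Q Qf Γ Γf B R η ηf x0 T Λ1 X s) ∧
    (∀ X s : ℝ → Fin n → ℝ,
      IsTPBVSol n n1 A G Q Qf Γ Γf B R η ηf x0 T Λ1 X s →
      ∀ t ∈ Set.Icc (0:ℝ) T, X t = Xbar t ∧ s t = Λ2 t *ᵥ Xbar t + χ1 t) :=
  tpbv_unique_solution_from_lam2_general n n1 T A G Q Qf Γ Γf B R η ηf x0 Λ1 hΛ1 Λ2 hΛ2 χ1 hχ1 Xbar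
    hXbar
end

section
/- The scalar Riccati terminal value problem Λ̇_2(t) = 2â Λ_2(t) + Λ_2(t)² + Q̂ on [0, T] with Λ_2(T) = 0 has a unique solution defined on the whole interval [0, T], for every T > 0, under either of the following two conditions: (i) Q̂ ≤ 0; (ii) 0 < Q̂ ≤ â² and â > 0. -/
/-!
The substitution `L = -u'/u - â` turns the Riccati equation into the linear equation
`u'' = (â² - Q̂) u`. Either condition gives `â² - Q̂ = d²` with `d ≥ 0` and `â + d ≥ 0`, and
then the solution with `u'(T) = -â u(T)`, `u(T) > 0` (a combination of `e^{±d(T-t)}`, or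
affine when `d = 0`) stays positive for `t ≤ T`, so `L` exists on the whole of `[0, T]`.
Uniqueness holds because the right-hand side is locally Lipschitz, hence Lipschitz on the
compact range of two solutions.
-/

open Set Real

theorem ODE_solution_unique_of_locallyLipschitz_of_mem_Icc_left
    {E : Type*} [NormedAddCommGroup E] [NormedSpace ℝ E]
    {v : E → E} (hv : LocallyLipschitz v) {f g : ℝ → E} {a b : ℝ}
    (hf : ∀ t ∈ Icc a b, HasDerivWithinAt f (v (f t)) (Icc a b) t)
    (hg : ∀ t ∈ Icc a b, HasDerivWithinAt g (v (g t)) (Icc a b) t)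
    (hb : f b = g b) : EqOn f g (Icc a b) := by
  have hfc : ContinuousOn f (Icc a b) := fun t ht => (hf t ht).continuousWithinAt
  have hgc : ContinuousOn g (Icc a b) := fun t ht => (hg t ht).continuousWithinAt
  set s := f '' Icc a b ∪ g '' Icc a b
  have hs : IsCompact s :=
    (isCompact_Icc.image_of_continuousOn hfc).union (isCompact_Icc.image_of_continuousOn hgc)
  obtain ⟨K, hK⟩ := hv.locallyLipschitzOn.exists_lipschitzOnWith_of_compact hs
  have hleft {h : ℝ → E} (hh : ∀ t ∈ Icc a b, HasDerivWithinAt h (v (h t)) (Icc a b) t)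
      (t : ℝ) (ht : t ∈ Ioc a b) : HasDerivWithinAt h (v (h t)) (Iic t) t :=
    (hh t (Ioc_subset_Icc_self ht)).mono_of_mem_nhdsWithin (Icc_mem_nhdsLE_of_mem ht)
  exact ODE_solution_unique_of_mem_Icc_left (v := fun _ => v) (s := fun _ => s)
    (fun _ _ => hK) hfc (hleft hf) (fun _ ht => Or.inl ⟨_, Ioc_subset_Icc_self ht, rfl⟩)
    hgc (hleft hg) (fun _ ht => Or.inr ⟨_, Ioc_subset_Icc_self ht, rfl⟩) hb

theorem hasDerivAt_exp_mul_sub (c T t : ℝ) :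
    HasDerivAt (fun s => exp (c * (T - s))) (-c * exp (c * (T - t))) t := by
  refine (((hasDerivAt_id' t).const_sub T).const_mul c).exp.congr_deriv ?_
  ring

section Riccati

variable (a Q : ℝ)

theorem locallyLipschitz_riccati : LocallyLipschitz fun x : ℝ => 2 * a * x + x ^ 2 + Q :=
  ContDiff.locallyLipschitz (𝕂 := ℝ) (by fun_prop)

variable {a Q}

theorem hasDerivAt_riccati_of_linear {u u' : ℝ → ℝ} {t : ℝ} (hu : HasDerivAt u (u' t) t)
    (hu' : HasDerivAt u' ((a ^ 2 - Q) * u t) t) (hne : u t ≠ 0) :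
    HasDerivAt (fun s => -u' s / u s - a)
      (2 * a * (-u' t / u t - a) + (-u' t / u t - a) ^ 2 + Q) t := by
  refine ((hu'.fun_neg.div hu hne).sub_const a).congr_deriv ?_
  field_simp
  ring

theorem exists_riccati_solution_of_linear {T : ℝ} {u u' : ℝ → ℝ}
    (hu : ∀ t, HasDerivAt u (u' t) t) (hu' : ∀ t, HasDerivAt u' ((a ^ 2 - Q) * u t) t)
    (hne : ∀ t ≤ T, u t ≠ 0) (hT : u' T = -a * u T) :
    ∃ L : ℝ → ℝ, (∀ t ≤ T, HasDerivAt L (2 * a * L t + L t ^ 2 + Q) t) ∧ L T = 0 :=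
  ⟨fun s => -u' s / u s - a, fun t ht => hasDerivAt_riccati_of_linear (hu t) (hu' t) (hne t ht),
    by simp [hT, hne T le_rfl]⟩

theorem exists_riccati_terminal_solution (T : ℝ) (hD : 0 ≤ a ^ 2 - Q)
    (ha : 0 ≤ a + √(a ^ 2 - Q)) :
    ∃ L : ℝ → ℝ, (∀ t ≤ T, HasDerivAt L (2 * a * L t + L t ^ 2 + Q) t) ∧ L T = 0 := by
  rcases hD.eq_or_lt with hD | hD
  · rw [← hD, sqrt_zero, add_zero] at ha
    refine exists_riccati_solution_of_linear (u := fun t => 1 + a * (T - t)) (u' := fun _ => -a)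
      (fun t => ?_) (fun t => ?_) (fun t ht => ?_) (by simp)
    · simpa using (((hasDerivAt_id t).const_sub T).const_mul a).const_add 1
    · simpa [← hD] using hasDerivAt_const t (-a)
    · have : 0 ≤ a * (T - t) := mul_nonneg ha (sub_nonneg.2 ht)
      positivity
  · set d := √(a ^ 2 - Q)
    have hd : 0 < d := sqrt_pos.2 hD
    have hd2 : d ^ 2 = a ^ 2 - Q := sq_sqrt hD.le
    refine exists_riccati_solution_of_linear
      (u := fun t => (a + d) * exp (d * (T - t)) + (d - a) * exp (-d * (T - t)))
      (u' := fun t => -d * (a + d) * exp (d * (T - t)) + d * (d - a) * exp (-d * (T - t)))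
      (fun t => ?_) (fun t => ?_) (fun t ht => ?_) (by simp; ring)
    · refine (((hasDerivAt_exp_mul_sub d T t).const_mul (a + d)).add
        ((hasDerivAt_exp_mul_sub (-d) T t).const_mul (d - a))).congr_deriv ?_
      ring
    · refine (((hasDerivAt_exp_mul_sub d T t).const_mul (-d * (a + d))).add
        ((hasDerivAt_exp_mul_sub (-d) T t).const_mul (d * (d - a)))).congr_deriv ?_
      rw [← hd2]
      ring
    · -- `u t = (a + d) (e^{dτ} - e^{-dτ}) + 2d e^{-dτ}` with `τ = T - t ≥ 0`
      have hexp : exp (-d * (T - t)) ≤ exp (d * (T - t)) :=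
        exp_le_exp.2 (by nlinarith [sub_nonneg.2 ht])
      have : 0 < d * exp (-d * (T - t)) := by positivity
      nlinarith [mul_nonneg ha (sub_nonneg.2 hexp)]

theorem riccati_discriminant_of_condition (h : Q ≤ 0 ∨ (0 < Q ∧ Q ≤ a ^ 2 ∧ 0 < a)) :
    0 ≤ a ^ 2 - Q ∧ 0 ≤ a + √(a ^ 2 - Q) := by
  rcases h with hQ | ⟨-, hQa, ha⟩
  · have hsqrt : |a| ≤ √(a ^ 2 - Q) := by
      rw [← sqrt_sq_eq_abs]
      exact sqrt_le_sqrt (by linarith)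
    exact ⟨by nlinarith [sq_nonneg a], by linarith [neg_abs_le a]⟩
  · exact ⟨sub_nonneg.2 hQa, add_nonneg ha.le (sqrt_nonneg _)⟩

end Riccati

/-- The scalar Riccati terminal value problem
`Λ̇₂ = 2â Λ₂ + Λ₂² + Q̂` on `[0,T]`, `Λ₂(T) = 0`, has a unique solution defined on the
whole interval `[0, T]`, for every `T > 0`, under either of the conditions
(i) `Q̂ ≤ 0`; (ii) `0 < Q̂ ≤ â²` and `â > 0`. -/
theorem scalar_riccati_global_solution
    (ahat Qhat : ℝ)
    (h : Qhat ≤ 0 ∨ (0 < Qhat ∧ Qhat ≤ ahat ^ 2 ∧ 0 < ahat)) :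
    ∀ T : ℝ, 0 < T →
      ∃ L : ℝ → ℝ,
        ((∀ t ∈ Set.Icc (0:ℝ) T,
            HasDerivWithinAt L (2 * ahat * L t + (L t) ^ 2 + Qhat)
              (Set.Icc (0:ℝ) T) t)
          ∧ L T = 0) ∧
        ∀ L' : ℝ → ℝ,
          ((∀ t ∈ Set.Icc (0:ℝ) T,
              HasDerivWithinAt L' (2 * ahat * L' t + (L' t) ^ 2 + Qhat)
                (Set.Icc (0:ℝ) T) t)
            ∧ L' T = 0) →
          ∀ t ∈ Set.Icc (0:ℝ) T, L' t = L t := by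
  intro T _
  obtain ⟨hD, ha⟩ := riccati_discriminant_of_condition h
  obtain ⟨L, hL, hLT⟩ := exists_riccati_terminal_solution T hD ha
  have hsol : ∀ t ∈ Icc 0 T, HasDerivWithinAt L (2 * ahat * L t + L t ^ 2 + Qhat) (Icc 0 T) t :=
    fun t ht => (hL t ht.2).hasDerivWithinAt
  refine ⟨L, ⟨hsol, hLT⟩, fun L' ⟨hL', hL'T⟩ => ?_⟩
  exact ODE_solution_unique_of_locallyLipschitz_of_mem_Icc_left
    (locallyLipschitz_riccati ahat Qhat) hL' hsol (hL'T.trans hLT.symm)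
end

section
/- (i) The non-symmetric algebraic Riccati equation (NARE) has a stabilizing solution Λ_{2∞} if and only if condition (H_g) holds, i.e., the 2n eigenvalues of 𝔸_∞ (counted with multiplicity, over ℂ) split as exactly n in the open left half plane and n in the open right half plane, and the associated n-dimensional stable invariant subspace of 𝔸_∞ is a graph subspace (it is spanned by the columns of a 2n×n real matrix whose top n×n submatrix is invertible). (ii) If (H_g) holds, the stabilizing solution of the NARE is unique. -/
open Matrix
open scoped Classical

/-!
A solution `X` of the NARE is exactly a matrix whose graph `[I; X]` is invariant under `𝔸_∞`,
with `𝔸_∞ [I; X] = [I; X] A_G`. Conjugating `𝔸_∞` by `[[I, 0], [X, I]]` makes it block upper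
triangular with diagonal blocks `A_G` and `-A_Mᵀ` (this uses the symmetry of `M` and `Λ_{1∞}`), so
the characteristic polynomial of `𝔸_∞` factors as that of `A_G` times that of `-A_Mᵀ`.
A stabilizing solution therefore gives the `(n, n)` splitting, with stable subspace the graph of
`X`. Conversely a stable graph subspace `[U₁; U₂]` yields `X = U₂ U₁⁻¹` with `A_G` similar to
the Hurwitz `A_o`; the `n` eigenvalues of `𝔸_∞` in the right half plane are then all eigenvalues
of `-A_Mᵀ`. Two stabilizing solutions `X`, `Y` satisfy the Sylvester equation
`-A_M(Y)ᵀ (X - Y) = (X - Y) A_G(X)` whose coefficients have disjoint spectra, so `X = Y`.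
-/

/-- A real square matrix is Hurwitz if all of its (complex) eigenvalues have
strictly negative real part. -/
def IsHurwitz {m : Type*} [Fintype m] [DecidableEq m] (Z : Matrix m m ℝ) : Prop :=
  ∀ μ ∈ spectrum ℂ (Z.map (algebraMap ℝ ℂ)), μ.re < 0

/-- `Λ_{2∞}` solves the non-symmetric algebraic Riccati equation (NARE)
`0 = Λ_{1∞} M Λ_{2∞} + Λ_{2∞} M Λ_{1∞} + Λ_{2∞} M Λ_{2∞}
   − (Λ_{1∞} G + Λ_{2∞}(A + G) + Aᵀ Λ_{2∞}) + QΓ`. -/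
def IsNARESol (n n1 : ℕ) (A G Q Γ : Matrix (Fin n) (Fin n) ℝ)
    (B : Matrix (Fin n) (Fin n1) ℝ) (R : Matrix (Fin n1) (Fin n1) ℝ)
    (L1inf L2inf : Matrix (Fin n) (Fin n) ℝ) : Prop :=
  0 = L1inf * Mmat n n1 B R * L2inf + L2inf * Mmat n n1 B R * L1inf
      + L2inf * Mmat n n1 B R * L2inf
      - (L1inf * G + L2inf * (A + G) + Aᵀ * L2inf) + Q * Γ

/-- A stabilizing solution of the NARE: it solves the NARE and both
`A_G = A − M(Λ_{1∞} + Λ_{2∞}) + G` and `A_M = A − M(Λ_{1∞} + Λ_{2∞}ᵀ)` are Hurwitz. -/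
def IsStabilizingSol (n n1 : ℕ) (A G Q Γ : Matrix (Fin n) (Fin n) ℝ)
    (B : Matrix (Fin n) (Fin n1) ℝ) (R : Matrix (Fin n1) (Fin n1) ℝ)
    (L1inf L2inf : Matrix (Fin n) (Fin n) ℝ) : Prop :=
  IsNARESol n n1 A G Q Γ B R L1inf L2inf ∧
  IsHurwitz (A - Mmat n n1 B R * (L1inf + L2inf) + G) ∧
  IsHurwitz (A - Mmat n n1 B R * (L1inf + L2infᵀ))

/-- The steady-state `2n × 2n` matrix
`𝔸_∞ = [[A − M Λ_{1∞} + G, −M], [QΓ − Λ_{1∞} G, −Aᵀ + Λ_{1∞} M]]`. -/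
noncomputable def bbAinf (n n1 : ℕ) (A G Q Γ : Matrix (Fin n) (Fin n) ℝ)
    (B : Matrix (Fin n) (Fin n1) ℝ) (R : Matrix (Fin n1) (Fin n1) ℝ)
    (L1inf : Matrix (Fin n) (Fin n) ℝ) :
    Matrix (Fin n ⊕ Fin n) (Fin n ⊕ Fin n) ℝ :=
  Matrix.fromBlocks (A - Mmat n n1 B R * L1inf + G) (-(Mmat n n1 B R))
    (Q * Γ - L1inf * G) (-Aᵀ + L1inf * Mmat n n1 B R)

/-- Condition (H_g): the `2n` eigenvalues of `𝔸_∞` (with multiplicity) have a strong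
`(n,n)` c-splitting (exactly `n` in the open left half plane and `n` in the open right
half plane), and the `n`-dimensional stable invariant subspace of `𝔸_∞` is a graph
subspace: it is spanned by the columns of a `2n × n` matrix `[U₁; U₂]` with `U₁`
invertible (equivalently, since the restriction of `𝔸_∞` to its stable invariant
subspace is Hurwitz, `𝔸_∞ [U₁;U₂] = [U₁;U₂] A_o` for some Hurwitz `A_o`). -/
def Hg (n n1 : ℕ) (A G Q Γ : Matrix (Fin n) (Fin n) ℝ)
    (B : Matrix (Fin n) (Fin n1) ℝ) (R : Matrix (Fin n1) (Fin n1) ℝ)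
    (L1inf : Matrix (Fin n) (Fin n) ℝ) : Prop :=
  (Multiset.card
      (((bbAinf n n1 A G Q Γ B R L1inf).map (algebraMap ℝ ℂ)).charpoly.roots.filter
        fun μ => μ.re < 0) = n ∧
    Multiset.card
      (((bbAinf n n1 A G Q Γ B R L1inf).map (algebraMap ℝ ℂ)).charpoly.roots.filter
        fun μ => 0 < μ.re) = n) ∧
  ∃ U1 U2 Ao : Matrix (Fin n) (Fin n) ℝ,
    IsUnit U1 ∧ IsHurwitz Ao ∧
    bbAinf n n1 A G Q Γ B R L1inf * Matrix.fromRows U1 U2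
      = Matrix.fromRows U1 U2 * Ao

open Polynomial

namespace Matrix

section Spectrum

variable {K : Type*} [Field K] {m l : Type*} [Fintype m] [DecidableEq m] [Fintype l] [DecidableEq l]

theorem mem_aroots_charpoly_iff_mem_spectrum_map {L : Type*} [Field L] [Algebra K L]
    (A : Matrix m m K) (μ : L) :
    μ ∈ A.charpoly.aroots L ↔ μ ∈ spectrum L (A.map (algebraMap K L)) := by
  rw [aroots_def, ← charpoly_map, mem_roots (charpoly_monic _).ne_zero,
    mem_spectrum_iff_isRoot_charpoly]

theorem card_aroots_charpoly {L : Type*} [Field L] [IsAlgClosed L] [Algebra K L]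
    (A : Matrix m m K) : (A.charpoly.aroots L).card = Fintype.card m := by
  rw [IsAlgClosed.card_aroots_eq_natDegree_of_isUnit_leadingCoeff
    (A.charpoly_monic.leadingCoeff ▸ isUnit_one), charpoly_natDegree_eq_dim]

theorem spectrum_neg_transpose (A : Matrix m m K) : spectrum K (-Aᵀ) = -spectrum K A := by
  rw [spectrum.neg_eq, ← transpose_neg]
  ext μ
  simp only [mem_spectrum_iff_isRoot_charpoly, charpoly_transpose]

theorem aeval_mul_eq_mul_aeval {R : Type*} [CommRing R] {P : Matrix m m R} {S : Matrix l l R}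
    {X : Matrix m l R} (h : P * X = X * S) (q : R[X]) : aeval P q * X = X * aeval S q := by
  have hpow : ∀ k : ℕ, P ^ k * X = X * S ^ k := by
    intro k
    induction k with
    | zero => simp
    | succ k ih => rw [pow_succ, pow_succ, Matrix.mul_assoc, h, ← Matrix.mul_assoc, ih,
        Matrix.mul_assoc]
  induction q using Polynomial.induction_on' with
  | add p q hp hq => rw [map_add, map_add, Matrix.add_mul, Matrix.mul_add, hp, hq]
  | monomial k c =>
    simp only [aeval_monomial, Algebra.algebraMap_eq_smul_one, Matrix.smul_mul, Matrix.mul_smul,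
      Matrix.one_mul, hpow]

theorem eq_zero_of_mul_eq_mul_of_disjoint_spectrum [IsAlgClosed K] {P : Matrix m m K}
    {S : Matrix l l K} {X : Matrix m l K} (h : P * X = X * S)
    (hPS : Disjoint (spectrum K P) (spectrum K S)) : X = 0 := by
  cases isEmpty_or_nonempty m
  · exact Subsingleton.elim _ _
  have hpos : 0 < P.charpoly.degree := by
    rw [charpoly_degree_eq_dim]; exact_mod_cast Fintype.card_pos
  have hunit : IsUnit (aeval S P.charpoly) := by
    rw [← spectrum.zero_notMem_iff K, spectrum.map_polynomial_aeval_of_degree_pos _ _ hpos]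
    rintro ⟨μ, hμS, hμ⟩
    exact hPS.ne_of_mem (mem_spectrum_iff_isRoot_charpoly.mpr hμ) hμS rfl
  obtain ⟨u, hu⟩ := hunit
  calc X = X * ((u : Matrix l l K) * ↑u⁻¹) := by rw [Units.mul_inv, Matrix.mul_one]
    _ = 0 := by rw [← Matrix.mul_assoc, hu, ← aeval_mul_eq_mul_aeval h, aeval_self_charpoly,
      Matrix.zero_mul, Matrix.zero_mul]

theorem eq_zero_of_mul_eq_mul_of_disjoint_spectrum_map {L : Type*} [Field L] [IsAlgClosed L]
    [Algebra K L] {P : Matrix m m K} {S : Matrix l l K} {X : Matrix m l K} (h : P * X = X * S)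
    (hPS : Disjoint (spectrum L (P.map (algebraMap K L))) (spectrum L (S.map (algebraMap K L)))) :
    X = 0 := by
  have hL := eq_zero_of_mul_eq_mul_of_disjoint_spectrum
    (by rw [← Matrix.map_mul, h, Matrix.map_mul]) hPS
  exact map_injective (algebraMap K L).injective (hL.trans (Matrix.map_zero _ (map_zero _)).symm)

end Spectrum

section Riccati

variable {R : Type*} [CommRing R] {m l : Type*} [Fintype m] [Fintype l]
  {H₁₁ : Matrix m m R} {H₁₂ : Matrix m l R} {H₂₁ : Matrix l m R} {H₂₂ : Matrix l l R}
  {X Y : Matrix l m R}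

theorem fromBlocks_mul_fromRows_one_eq_iff [DecidableEq m] {K : Matrix m m R} :
    fromBlocks H₁₁ H₁₂ H₂₁ H₂₂ * fromRows (1 : Matrix m m R) X = fromRows 1 X * K ↔
      H₁₁ + H₁₂ * X = K ∧ H₂₁ + H₂₂ * X = X * K := by
  simp only [fromBlocks_mul_fromRows, fromRows_mul, fromRows_inj.eq_iff, Matrix.mul_one,
    Matrix.one_mul]

theorem fromBlocks_eq_conj_of_riccati [DecidableEq m] [DecidableEq l]
    (h : H₂₁ + H₂₂ * X = X * (H₁₁ + H₁₂ * X)) :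
    fromBlocks H₁₁ H₁₂ H₂₁ H₂₂ = fromBlocks 1 0 X 1 *
      fromBlocks (H₁₁ + H₁₂ * X) H₁₂ 0 (H₂₂ - X * H₁₂) * fromBlocks 1 0 (-X) 1 := by
  simp only [fromBlocks_multiply, fromBlocks_inj, Matrix.one_mul, Matrix.mul_one, Matrix.zero_mul,
    Matrix.mul_zero, Matrix.mul_neg, zero_add, add_zero, ← h]
  refine ⟨by abel, trivial, ?_, by abel⟩
  simp only [Matrix.add_mul, Matrix.sub_mul, Matrix.mul_assoc]
  abel

theorem charpoly_fromBlocks_of_riccati [DecidableEq m] [DecidableEq l]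
    (h : H₂₁ + H₂₂ * X = X * (H₁₁ + H₁₂ * X)) :
    (fromBlocks H₁₁ H₁₂ H₂₁ H₂₂).charpoly =
      (H₁₁ + H₁₂ * X).charpoly * (H₂₂ - X * H₁₂).charpoly := by
  have hinv : fromBlocks 1 0 (-X) 1 * fromBlocks 1 0 X 1 = (1 : Matrix (m ⊕ l) (m ⊕ l) R) := by
    simp [fromBlocks_multiply, fromBlocks_one]
  rw [fromBlocks_eq_conj_of_riccati h, charpoly_mul_comm, ← Matrix.mul_assoc, hinv,
    Matrix.one_mul, charpoly_fromBlocks_zero₂₁]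

theorem riccati_sub_mul_sub (hX : H₂₁ + H₂₂ * X = X * (H₁₁ + H₁₂ * X))
    (hY : H₂₁ + H₂₂ * Y = Y * (H₁₁ + H₁₂ * Y)) :
    (H₂₂ - Y * H₁₂) * (X - Y) = (X - Y) * (H₁₁ + H₁₂ * X) := by
  have key : (H₂₂ - Y * H₁₂) * (X - Y) - (X - Y) * (H₁₁ + H₁₂ * X) =
      (Y * (H₁₁ + H₁₂ * Y) - (H₂₁ + H₂₂ * Y)) - (X * (H₁₁ + H₁₂ * X) - (H₂₁ + H₂₂ * X)) := by
    simp only [Matrix.mul_add, Matrix.sub_mul, Matrix.mul_sub, Matrix.mul_assoc]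
    abel
  rw [← sub_eq_zero, key, hX, hY, sub_self, sub_self, sub_zero]

end Riccati

end Matrix

namespace Multiset

theorem card_filter_re_add_of_forall {s t : Multiset ℂ} (hs : ∀ μ ∈ s, μ.re < 0)
    (ht : ∀ μ ∈ t, 0 < μ.re) :
    card ((s + t).filter fun μ => μ.re < 0) = card s ∧
      card ((s + t).filter fun μ => 0 < μ.re) = card t := by
  rw [filter_add, filter_add, filter_eq_self.mpr hs, filter_eq_self.mpr ht,
    filter_eq_nil.mpr fun μ hμ => (ht μ hμ).not_gt, filter_eq_nil.mpr fun μ hμ => (hs μ hμ).not_gt]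
  simp

theorem forall_re_pos_of_card_filter_add {s t : Multiset ℂ} (hs : ∀ μ ∈ s, μ.re < 0)
    (h : card ((s + t).filter fun μ => 0 < μ.re) = card t) : ∀ μ ∈ t, 0 < μ.re := by
  rw [filter_add, filter_eq_nil.mpr fun μ hμ => (hs μ hμ).not_gt, zero_add] at h
  exact filter_eq_self.mp (eq_of_le_of_card_le (filter_le _ _) h.ge)

end Multiset

section Hurwitz

variable {m : Type*} [Fintype m] [DecidableEq m]

theorem isHurwitz_iff_forall_mem_aroots (Z : Matrix m m ℝ) :
    IsHurwitz Z ↔ ∀ μ ∈ Z.charpoly.aroots ℂ, μ.re < 0 := by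
  simp only [IsHurwitz, Matrix.mem_aroots_charpoly_iff_mem_spectrum_map]

theorem isHurwitz_iff_forall_mem_aroots_neg_transpose (Z : Matrix m m ℝ) :
    IsHurwitz Z ↔ ∀ μ ∈ (-Zᵀ).charpoly.aroots ℂ, 0 < μ.re := by
  have hmap : (-Zᵀ).map (algebraMap ℝ ℂ) = -(Z.map (algebraMap ℝ ℂ))ᵀ := by
    rw [Matrix.map_neg _ (map_neg _), Matrix.transpose_map]
  simp only [IsHurwitz, Matrix.mem_aroots_charpoly_iff_mem_spectrum_map, hmap,
    Matrix.spectrum_neg_transpose, Set.mem_neg]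
  exact ⟨fun h μ hμ => by simpa using h _ hμ,
    fun h μ hμ => by simpa using h (-μ) (by simpa using hμ)⟩

theorem IsHurwitz.conj {Z U : Matrix m m ℝ} (hZ : IsHurwitz Z) (hU : IsUnit U) :
    IsHurwitz (U * Z * U⁻¹) := by
  have hchar := Matrix.charpoly_units_conj hU.unit Z
  rw [hU.unit_spec] at hchar
  rwa [isHurwitz_iff_forall_mem_aroots, hchar, ← isHurwitz_iff_forall_mem_aroots]

end Hurwitz

section NARE

variable {n n1 : ℕ} {A G Q Γ : Matrix (Fin n) (Fin n) ℝ} {B : Matrix (Fin n) (Fin n1) ℝ}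
  {R : Matrix (Fin n1) (Fin n1) ℝ} {L1inf X Y : Matrix (Fin n) (Fin n) ℝ}

theorem isSymm_Mmat (hR : R.IsSymm) : (Mmat n n1 B R).IsSymm := by
  simp only [Matrix.IsSymm, Mmat, Matrix.transpose_mul, Matrix.transpose_transpose, hR.inv.eq,
    Matrix.mul_assoc]

theorem add_neg_Mmat_mul_eq :
    A - Mmat n n1 B R * L1inf + G + -Mmat n n1 B R * X = A - Mmat n n1 B R * (L1inf + X) + G := by
  noncomm_ring

theorem neg_transpose_sub_Mmat_mul_eq (hM : (Mmat n n1 B R).IsSymm) (hL : L1inf.IsSymm) :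
    -Aᵀ + L1inf * Mmat n n1 B R - X * -Mmat n n1 B R = -(A - Mmat n n1 B R * (L1inf + Xᵀ))ᵀ := by
  rw [Matrix.transpose_sub, Matrix.transpose_mul, Matrix.transpose_add, Matrix.transpose_transpose,
    hM.eq, hL.eq]
  noncomm_ring

/-- The NARE is the Riccati equation `H₂₁ + H₂₂ X = X (H₁₁ + H₁₂ X)` of the blocks of `𝔸_∞`. -/
theorem isNARESol_iff_riccati : IsNARESol n n1 A G Q Γ B R L1inf X ↔
    Q * Γ - L1inf * G + (-Aᵀ + L1inf * Mmat n n1 B R) * X =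
      X * (A - Mmat n n1 B R * L1inf + G + -Mmat n n1 B R * X) := by
  rw [IsNARESol, eq_comm, ← sub_eq_zero (a := Q * Γ - L1inf * G + _)]
  exact Eq.congr_left (by noncomm_ring)

theorem bbAinf_mul_fromRows_one_eq_iff {K : Matrix (Fin n) (Fin n) ℝ} :
    bbAinf n n1 A G Q Γ B R L1inf * fromRows (1 : Matrix (Fin n) (Fin n) ℝ) X = fromRows 1 X * K ↔
      A - Mmat n n1 B R * (L1inf + X) + G = K ∧ IsNARESol n n1 A G Q Γ B R L1inf X := by
  rw [bbAinf, Matrix.fromBlocks_mul_fromRows_one_eq_iff, isNARESol_iff_riccati,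
    add_neg_Mmat_mul_eq]
  constructor <;> rintro ⟨rfl, h⟩ <;> exact ⟨rfl, h⟩

theorem roots_charpoly_map_bbAinf (hM : (Mmat n n1 B R).IsSymm) (hL : L1inf.IsSymm)
    (hX : IsNARESol n n1 A G Q Γ B R L1inf X) :
    ((bbAinf n n1 A G Q Γ B R L1inf).map (algebraMap ℝ ℂ)).charpoly.roots =
      (A - Mmat n n1 B R * (L1inf + X) + G).charpoly.aroots ℂ +
        (-(A - Mmat n n1 B R * (L1inf + Xᵀ))ᵀ).charpoly.aroots ℂ := by
  rw [isNARESol_iff_riccati] at hX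
  rw [Matrix.charpoly_map, ← aroots_def, bbAinf, Matrix.charpoly_fromBlocks_of_riccati hX,
    add_neg_Mmat_mul_eq, neg_transpose_sub_Mmat_mul_eq hM hL,
    aroots_mul ((Matrix.charpoly_monic _).mul (Matrix.charpoly_monic _)).ne_zero]

theorem neg_transpose_mul_sub_eq_sub_mul (hM : (Mmat n n1 B R).IsSymm) (hL : L1inf.IsSymm)
    (hX : IsNARESol n n1 A G Q Γ B R L1inf X) (hY : IsNARESol n n1 A G Q Γ B R L1inf Y) :
    -(A - Mmat n n1 B R * (L1inf + Yᵀ))ᵀ * (X - Y) =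
      (X - Y) * (A - Mmat n n1 B R * (L1inf + X) + G) := by
  rw [← neg_transpose_sub_Mmat_mul_eq hM hL, ← add_neg_Mmat_mul_eq]
  exact Matrix.riccati_sub_mul_sub (isNARESol_iff_riccati.mp hX) (isNARESol_iff_riccati.mp hY)

theorem hg_of_isStabilizingSol (hM : (Mmat n n1 B R).IsSymm) (hL : L1inf.IsSymm)
    (h : IsStabilizingSol n n1 A G Q Γ B R L1inf X) : Hg n n1 A G Q Γ B R L1inf := by
  obtain ⟨hX, hG, hAM⟩ := h
  have hcard := Multiset.card_filter_re_add_of_forall ((isHurwitz_iff_forall_mem_aroots _).mp hG)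
    ((isHurwitz_iff_forall_mem_aroots_neg_transpose _).mp hAM)
  simp only [Matrix.card_aroots_charpoly, Fintype.card_fin] at hcard
  refine ⟨roots_charpoly_map_bbAinf hM hL hX ▸ hcard, 1, X, _, isUnit_one, hG,
    bbAinf_mul_fromRows_one_eq_iff.mpr ⟨rfl, hX⟩⟩

theorem exists_isStabilizingSol_of_hg (hM : (Mmat n n1 B R).IsSymm) (hL : L1inf.IsSymm)
    (h : Hg n n1 A G Q Γ B R L1inf) : ∃ X, IsStabilizingSol n n1 A G Q Γ B R L1inf X := by
  obtain ⟨⟨-, hpos⟩, U1, U2, Ao, hU1, hAo, hU⟩ := h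
  have hdet := (Matrix.isUnit_iff_isUnit_det U1).mp hU1
  have hrows : fromRows U1 U2 = fromRows (1 : Matrix (Fin n) (Fin n) ℝ) (U2 * U1⁻¹) * U1 := by
    rw [fromRows_mul, Matrix.one_mul, Matrix.mul_assoc, Matrix.nonsing_inv_mul _ hdet,
      Matrix.mul_one]
  have hinv : bbAinf n n1 A G Q Γ B R L1inf * fromRows (1 : Matrix (Fin n) (Fin n) ℝ) (U2 * U1⁻¹) =
      fromRows 1 (U2 * U1⁻¹) * (U1 * Ao * U1⁻¹) := by
    calc _ = bbAinf n n1 A G Q Γ B R L1inf * fromRows U1 U2 * U1⁻¹ := by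
          rw [hrows, Matrix.mul_assoc, Matrix.mul_assoc, Matrix.mul_nonsing_inv _ hdet,
            Matrix.mul_one]
      _ = _ := by rw [hU, hrows]; simp only [Matrix.mul_assoc]
  obtain ⟨hAG, hX⟩ := bbAinf_mul_fromRows_one_eq_iff.mp hinv
  have hG : IsHurwitz (A - Mmat n n1 B R * (L1inf + U2 * U1⁻¹) + G) := hAG ▸ hAo.conj hU1
  refine ⟨U2 * U1⁻¹, hX, hG, ?_⟩
  rw [isHurwitz_iff_forall_mem_aroots_neg_transpose]
  refine Multiset.forall_re_pos_of_card_filter_add ((isHurwitz_iff_forall_mem_aroots _).mp hG) ?_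
  rw [← roots_charpoly_map_bbAinf hM hL hX, hpos, Matrix.card_aroots_charpoly, Fintype.card_fin]

theorem IsStabilizingSol.unique (hM : (Mmat n n1 B R).IsSymm) (hL : L1inf.IsSymm)
    (hX : IsStabilizingSol n n1 A G Q Γ B R L1inf X)
    (hY : IsStabilizingSol n n1 A G Q Γ B R L1inf Y) : X = Y := by
  refine sub_eq_zero.mp (Matrix.eq_zero_of_mul_eq_mul_of_disjoint_spectrum_map (L := ℂ)
    (neg_transpose_mul_sub_eq_sub_mul hM hL hX.1 hY.1) (Set.disjoint_right.mpr fun μ hμG hμM => ?_))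
  have hpos := (isHurwitz_iff_forall_mem_aroots_neg_transpose _).mp hY.2.2 μ
    ((Matrix.mem_aroots_charpoly_iff_mem_spectrum_map _ _).mpr hμM)
  exact (hX.2.1 μ hμG).not_gt hpos

end NARE

theorem nare_stabilizing_solution_iff_Hg_general
    (n n1 : ℕ)
    (A G Q Γ : Matrix (Fin n) (Fin n) ℝ)
    (B : Matrix (Fin n) (Fin n1) ℝ) (R : Matrix (Fin n1) (Fin n1) ℝ)
    (hR : R.PosDef)
    (L1inf : Matrix (Fin n) (Fin n) ℝ)
    (hL1 : L1inf.PosSemidef ∧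
      L1inf * Mmat n n1 B R * L1inf - (L1inf * A + Aᵀ * L1inf) - Q = 0) :
    ((∃ L2inf : Matrix (Fin n) (Fin n) ℝ,
        IsStabilizingSol n n1 A G Q Γ B R L1inf L2inf)
      ↔ Hg n n1 A G Q Γ B R L1inf) ∧
    (Hg n n1 A G Q Γ B R L1inf →
      ∀ L2inf L2inf' : Matrix (Fin n) (Fin n) ℝ,
        IsStabilizingSol n n1 A G Q Γ B R L1inf L2inf →
        IsStabilizingSol n n1 A G Q Γ B R L1inf L2inf' →
        L2inf = L2inf') := by
  have hM := isSymm_Mmat (B := B) (Matrix.isHermitian_iff_isSymm.mp hR.1)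
  have hL := Matrix.isHermitian_iff_isSymm.mp hL1.1.1
  exact ⟨⟨fun ⟨_, hX⟩ => hg_of_isStabilizingSol hM hL hX, exists_isStabilizingSol_of_hg hM hL⟩,
    fun _ _ _ hX hY => hX.unique hM hL hY⟩

/-- Under (H1), with `Λ_{1∞}` the positive semidefinite solution of
the ARE: (i) the NARE has a stabilizing solution `Λ_{2∞}` if and only if (H_g) holds;
(ii) if (H_g) holds, the stabilizing solution is unique. -/
theorem nare_stabilizing_solution_iff_Hg
    (n n1 : ℕ) (hn : 0 < n) (hn1 : 0 < n1)
    (A G Q Γ : Matrix (Fin n) (Fin n) ℝ)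
    (B : Matrix (Fin n) (Fin n1) ℝ) (R : Matrix (Fin n1) (Fin n1) ℝ)
    (hR : R.PosDef) (hQ : Q.PosSemidef)
    -- (H1): (A,B) stabilizable and (A, Q^{1/2}) detectable
    (hstab : ∃ K : Matrix (Fin n1) (Fin n) ℝ, IsHurwitz (A - B * K))
    (hdet : ∃ L : Matrix (Fin n) (Fin n) ℝ, IsHurwitz (A - L * (hQ.1.eigenvectorUnitary.1 *
      diagonal ((↑) ∘ (√·) ∘ hQ.1.eigenvalues) *
      (star hQ.1.eigenvectorUnitary : Matrix (Fin n) (Fin n) ℝ))))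
    (L1inf : Matrix (Fin n) (Fin n) ℝ)
    (hL1 : L1inf.PosSemidef ∧
      L1inf * Mmat n n1 B R * L1inf - (L1inf * A + Aᵀ * L1inf) - Q = 0) :
    ((∃ L2inf : Matrix (Fin n) (Fin n) ℝ,
        IsStabilizingSol n n1 A G Q Γ B R L1inf L2inf)
      ↔ Hg n n1 A G Q Γ B R L1inf) ∧
    (Hg n n1 A G Q Γ B R L1inf →
      ∀ L2inf L2inf' : Matrix (Fin n) (Fin n) ℝ,
        IsStabilizingSol n n1 A G Q Γ B R L1inf L2inf →
        IsStabilizingSol n n1 A G Q Γ B R L1inf L2inf' →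
        L2inf = L2inf') :=
  nare_stabilizing_solution_iff_Hg_general n n1 A G Q Γ B R hR L1inf hL1
end
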